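/- arXiv:1810.11798 — 7 statements merged into one kernel-verified Lean document; each statement's English description precedes it below -/
import Mathlib

section
/- Let (A_ℓ)_{ℓ≥0} be nonnegative functions of t ≥ 0 with A_0(t) ≤ 1 for all t, and suppose that for every ℓ ≥ 1 and t ≥ 0, A_ℓ(t) ≤ Σ_{j=0}^{ℓ−1} ∫_0^t A_j(s)·A_{ℓ−1−j}(s) ds. Then A_ℓ(t) ≤ C_ℓ · t^ℓ for all ℓ ≥ 0 and t ≥ 0, where C_ℓ is the ℓ-th Catalan number. -/
open intervalIntegral

lemma catalan_sum_range (n : ℕ) :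
    ∑ j ∈ Finset.range (n + 1), (catalan j : ℝ) * catalan (n - j) = catalan (n + 1) := by
  rw [catalan_succ]
  push_cast
  rw [← Fin.sum_univ_eq_sum_range]

/-- Catalan-number bound for the recursive integral inequalities arising in the
Cauchy–Kovalevsky series for the asymptotic Muskat equation. -/
theorem stmt_5 (A : ℕ → ℝ → ℝ)
    (hnonneg : ∀ ℓ t, 0 ≤ t → 0 ≤ A ℓ t)
    (hA0 : ∀ t, 0 ≤ t → A 0 t ≤ 1)
    (hrec : ∀ ℓ, 1 ≤ ℓ → ∀ t, 0 ≤ t →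
      A ℓ t ≤ ∑ j ∈ Finset.range ℓ, ∫ s in (0:ℝ)..t, A j s * A (ℓ - 1 - j) s) :
    ∀ ℓ t, 0 ≤ t → A ℓ t ≤ (catalan ℓ : ℝ) * t ^ ℓ := by
  intro ℓ
  induction ℓ using Nat.strong_induction_on with
  | _ ℓ ih =>
    intro t ht
    match ℓ with
    | 0 => simpa using hA0 t ht
    | Nat.succ n =>
      have h1 : A (n + 1) t ≤ ∑ j ∈ Finset.range (n + 1), ∫ s in (0:ℝ)..t, A j s * A (n - j) s := by
        simpa using hrec (n + 1) (Nat.succ_le_succ (Nat.zero_le n)) t ht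
      have hterm : ∀ j ∈ Finset.range (n + 1),
          (∫ s in (0:ℝ)..t, A j s * A (n - j) s)
            ≤ ((catalan j : ℝ) * catalan (n - j)) * (t ^ (n + 1) / (n + 1)) := by
        intro j hj
        have hjn : j ≤ n := Nat.lt_succ_iff.mp (Finset.mem_range.mp hj)
        have hgval : (∫ s in (0:ℝ)..t, ((catalan j : ℝ) * catalan (n - j)) * s ^ n)
            = ((catalan j : ℝ) * catalan (n - j)) * (t ^ (n + 1) / (n + 1)) := by
          rw [intervalIntegral.integral_const_mul, integral_pow]
          ring
        have hbd : ∀ s ∈ Set.Icc (0:ℝ) t,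
            A j s * A (n - j) s ≤ ((catalan j : ℝ) * catalan (n - j)) * s ^ n := by
          intro s hs
          have h1 := ih j (Nat.lt_succ_of_le hjn) s hs.1
          have h2 := ih (n - j) (Nat.lt_succ_of_le (Nat.sub_le n j)) s hs.1
          have := mul_le_mul h1 h2 (hnonneg _ _ hs.1)
            (mul_nonneg (Nat.cast_nonneg _) (pow_nonneg hs.1 _))
          calc A j s * A (n - j) s ≤ ((catalan j : ℝ) * s ^ j) * ((catalan (n - j) : ℝ) * s ^ (n - j)) := this
            _ = ((catalan j : ℝ) * catalan (n - j)) * (s ^ j * s ^ (n - j)) := by ring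
            _ = ((catalan j : ℝ) * catalan (n - j)) * s ^ n := by
                rw [← pow_add, Nat.add_sub_cancel' hjn]
        by_cases hint : IntervalIntegrable (fun s => A j s * A (n - j) s) MeasureTheory.volume 0 t
        · rw [← hgval]
          refine intervalIntegral.integral_mono_on ht hint ?_ hbd
          exact (Continuous.intervalIntegrable (by continuity) _ _)
        · rw [intervalIntegral.integral_undef hint]
          have : (0:ℝ) ≤ ((catalan j : ℝ) * catalan (n - j)) * (t ^ (n + 1) / (n + 1)) := by
            positivity
          linarith
      have h2 : A (n + 1) t ≤ (catalan (n + 1) : ℝ) * (t ^ (n + 1) / (n + 1)) := by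
        calc A (n + 1) t ≤ _ := h1
          _ ≤ ∑ j ∈ Finset.range (n + 1),
              ((catalan j : ℝ) * catalan (n - j)) * (t ^ (n + 1) / (n + 1)) :=
            Finset.sum_le_sum hterm
          _ = (catalan (n + 1) : ℝ) * (t ^ (n + 1) / (n + 1)) := by
            rw [← Finset.sum_mul, catalan_sum_range]
      have h3 : t ^ (n + 1) / (n + 1) ≤ t ^ (n + 1) := by
        apply div_le_self (by positivity)
        exact_mod_cast Nat.one_le_iff_ne_zero.mpr (Nat.succ_ne_zero n)
      have hc : (0:ℝ) ≤ catalan (n + 1) := Nat.cast_nonneg _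
      calc A (n + 1) t ≤ (catalan (n + 1) : ℝ) * (t ^ (n + 1) / (n + 1)) := h2
        _ ≤ (catalan (n + 1) : ℝ) * t ^ (n + 1) := mul_le_mul_of_nonneg_left h3 hc
end

section
/- For mean-free f in A¹(T), one has ‖∂ₓ²([H, f] Λ f)‖_{A⁰} ≤ 2 ‖f‖_{A¹} ‖f‖_{A²}. -/
open Complex

private lemma key_int (k m : ℤ) :
    |k * (|k| * |k - m| - k * (k - m))| ≤ 2 * |k - m| * m ^ 2 := by
  rcases le_or_gt 0 (k * (k - m)) with h | h
  · have h1 : |k| * |k - m| = k * (k - m) := by rw [← abs_mul]; exact abs_of_nonneg h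
    rw [h1]
    simp only [sub_self, mul_zero, abs_zero]
    positivity
  · have h1 : |k| * |k - m| = -(k * (k - m)) := by rw [← abs_mul]; exact abs_of_neg h
    have hm : k ^ 2 ≤ m ^ 2 := by nlinarith [sq_nonneg (k - m)]
    have e : k * (-(k * (k - m)) - k * (k - m)) = (-2 * (k * k)) * (k - m) := by ring
    rw [h1, e, abs_mul]
    have h2 : |(-2 * (k * k))| = 2 * k ^ 2 := by
      rw [abs_of_nonpos (by nlinarith [sq_nonneg k])]; ring
    rw [h2]
    nlinarith [abs_nonneg (k - m)]

private def subEquiv : ℤ × ℤ ≃ ℤ × ℤ :=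
  ⟨fun p => (p.1 - p.2, p.2), fun p => (p.1 + p.2, p.2),
    fun p => by simp, fun p => by simp⟩

/-- ‖∂ₓ²([H,f]Λf)‖_{A⁰} ≤ 2‖f‖_{A¹}‖f‖_{A²}, expressed on Fourier coefficients.
The Fourier coefficient of ∂ₓ²([H,f]Λf) at frequency k is
Σ_m f̂(k−m) f̂(m) p(k,m) with p(k,m) = ik(|k||k−m| − k(k−m)). -/
theorem stmt_9 (fhat : ℤ → ℂ) (hf0 : fhat 0 = 0)
    (hf1 : Summable fun k : ℤ => (|k| : ℝ) * ‖fhat k‖)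
    (hf2 : Summable fun k : ℤ => (|k| : ℝ) ^ 2 * ‖fhat k‖) :
    ∑' k : ℤ,
        ‖∑' m : ℤ, fhat (k - m) * fhat m *
          (Complex.I * (k : ℂ) * (((|k| * |k - m| : ℤ) : ℂ) - ((k * (k - m) : ℤ) : ℂ)))‖ ≤
      2 * (∑' k : ℤ, (|k| : ℝ) * ‖fhat k‖) * (∑' k : ℤ, (|k| : ℝ) ^ 2 * ‖fhat k‖) := by
  set g : ℤ → ℝ := fun j => 2 * ((|j| : ℝ) * ‖fhat j‖) with hg
  set h : ℤ → ℝ := fun j => (|j| : ℝ) ^ 2 * ‖fhat j‖ with hh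
  set t : ℤ → ℤ → ℂ := fun k m => fhat (k - m) * fhat m *
      (Complex.I * (k : ℂ) * (((|k| * |k - m| : ℤ) : ℂ) - ((k * (k - m) : ℤ) : ℂ))) with ht
  -- pointwise bound
  have hpt : ∀ k m : ℤ, ‖t k m‖ ≤ g (k - m) * h m := by
    intro k m
    have hnorm : ‖t k m‖ = ‖fhat (k - m)‖ * ‖fhat m‖ *
        |((k * (|k| * |k - m| - k * (k - m)) : ℤ) : ℝ)| := by
      simp only [ht, norm_mul, Complex.norm_I, one_mul]
      rw [show (((|k| * |k - m| : ℤ) : ℂ) - ((k * (k - m) : ℤ) : ℂ))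
            = (((|k| * |k - m| - k * (k - m) : ℤ)) : ℂ) by push_cast; ring]
      rw [Complex.norm_intCast, Complex.norm_intCast, Int.cast_mul, abs_mul]
    rw [hnorm]
    have hb : |((k * (|k| * |k - m| - k * (k - m)) : ℤ) : ℝ)|
        ≤ ((2 * |k - m| * m ^ 2 : ℤ) : ℝ) := by
      rw [← Int.cast_abs]; exact_mod_cast key_int k m
    calc ‖fhat (k - m)‖ * ‖fhat m‖ * |((k * (|k| * |k - m| - k * (k - m)) : ℤ) : ℝ)|
        ≤ ‖fhat (k - m)‖ * ‖fhat m‖ * ((2 * |k - m| * m ^ 2 : ℤ) : ℝ) :=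
          mul_le_mul_of_nonneg_left hb (by positivity)
      _ = g (k - m) * h m := by
          simp only [hg, hh]
          push_cast
          rw [_root_.sq_abs]
          ring
  -- summability of the product kernel
  have hgsum : Summable g := hf1.mul_left 2
  have hG : Summable fun p : ℤ × ℤ => g p.1 * h p.2 := by
    apply Summable.mul_of_nonneg hgsum hf2
    · intro j; simp only [hg]; positivity
    · intro j; simp only [hh]; positivity
  have hF : Summable fun p : ℤ × ℤ => g (p.1 - p.2) * h p.2 := by
    have := (Equiv.summable_iff subEquiv
      (f := fun p : ℤ × ℤ => g p.1 * h p.2)).mpr hG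
    exact this.congr fun p => rfl
  -- fiberwise summability
  have hFk : ∀ k : ℤ, Summable fun m => g (k - m) * h m := fun k => hF.prod_factor k
  have htk : ∀ k : ℤ, Summable fun m => ‖t k m‖ := by
    intro k
    exact Summable.of_nonneg_of_le (fun m => norm_nonneg _) (hpt k) (hFk k)
  -- bound the inner sums
  have hinner : ∀ k : ℤ, ‖∑' m, t k m‖ ≤ ∑' m, g (k - m) * h m := by
    intro k
    calc ‖∑' m, t k m‖ ≤ ∑' m, ‖t k m‖ := norm_tsum_le_tsum_norm (htk k)
      _ ≤ ∑' m, g (k - m) * h m := Summable.tsum_le_tsum (hpt k) (htk k) (hFk k)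
  have hS : Summable fun k => ∑' m, g (k - m) * h m :=
    (hF.hasSum.prod_fiberwise fun k => (hFk k).hasSum).summable
  have hLHS : Summable fun k => ‖∑' m, t k m‖ :=
    Summable.of_nonneg_of_le (fun k => norm_nonneg _) hinner hS
  calc ∑' k, ‖∑' m, t k m‖ ≤ ∑' k, ∑' m, g (k - m) * h m :=
        Summable.tsum_le_tsum hinner hLHS hS
    _ = ∑' p : ℤ × ℤ, g (p.1 - p.2) * h p.2 := (Summable.tsum_prod hF).symm
    _ = ∑' p : ℤ × ℤ, g p.1 * h p.2 := by
        rw [← Equiv.tsum_eq subEquiv (fun p : ℤ × ℤ => g p.1 * h p.2)]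
        exact tsum_congr fun c => rfl
    _ = ∑' k, ∑' m, g k * h m := Summable.tsum_prod hG
    _ = (∑' k, g k) * (∑' m, h m) := by
        simp_rw [tsum_mul_left]
        exact tsum_mul_right
    _ = 2 * (∑' k : ℤ, (|k| : ℝ) * ‖fhat k‖) * (∑' k : ℤ, (|k| : ℝ) ^ 2 * ‖fhat k‖) := by
        simp only [hg, hh]
        rw [tsum_mul_left]
end

section
/- Let f be absolutely continuous in time with values in A¹(T) satisfying df/dt ‖f(t)‖_{A¹} + (1 − 2‖f(t)‖_{A¹}) ‖f(t)‖_{A²} ≤ 0 in the a.e. sense, and assume ‖f(0)‖_{A¹} < 1/2. Then ‖f(t)‖_{A¹} ≤ ‖f(0)‖_{A¹} < 1/2 for all t ≥ 0. -/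
/-- Bootstrap argument: if y(t) = ‖f(t)‖_{A¹} and z(t) = ‖f(t)‖_{A²} satisfy
y' + (1 − 2y) z ≤ 0 with z ≥ 0, and y(0) < 1/2, then y(t) ≤ y(0) < 1/2 for t ≥ 0. -/
theorem stmt_10 (y y' z : ℝ → ℝ)
    (hy_nonneg : ∀ t, 0 ≤ t → 0 ≤ y t)
    (hz_nonneg : ∀ t, 0 ≤ t → 0 ≤ z t)
    (hderiv : ∀ t, 0 ≤ t → HasDerivAt y (y' t) t)
    (hineq : ∀ t, 0 ≤ t → y' t + (1 - 2 * y t) * z t ≤ 0)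
    (h0 : y 0 < 1 / 2) :
    ∀ t, 0 ≤ t → y t ≤ y 0 ∧ y t < 1 / 2 := by
  have cont : ∀ t, 0 ≤ t → ContinuousAt y t := fun t ht => (hderiv t ht).continuousAt
  have key : ∀ t, 0 ≤ t → y t ≤ y 0 := by
    intro t ht
    set S : Set ℝ := {s | s ∈ Set.Icc (0:ℝ) t ∧ ∀ r ∈ Set.Icc (0:ℝ) s, y r ≤ y 0} with hS
    have h0S : (0:ℝ) ∈ S := ⟨⟨le_refl 0, ht⟩, fun r hr => by
      have : r = 0 := le_antisymm hr.2 hr.1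
      simp [this]⟩
    have hbdd : BddAbove S := ⟨t, fun s hs => hs.1.2⟩
    set T := sSup S with hT
    have hT0 : 0 ≤ T := le_csSup hbdd h0S
    have hTt : T ≤ t := csSup_le ⟨0, h0S⟩ (fun s hs => hs.1.2)
    have hlt : ∀ r, 0 ≤ r → r < T → y r ≤ y 0 := by
      intro r hr hrT
      obtain ⟨s, hsS, hrs⟩ := exists_lt_of_lt_csSup ⟨0, h0S⟩ hrT
      exact hsS.2 r ⟨hr, hrs.le⟩
    have hyT : y T ≤ y 0 := by
      rcases eq_or_lt_of_le hT0 with h | h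
      · simp [← h]
      · have htend : Filter.Tendsto y (nhdsWithin T (Set.Iio T)) (nhds (y T)) :=
          ((cont T hT0).tendsto).mono_left nhdsWithin_le_nhds
        refine le_of_tendsto htend ?_
        filter_upwards [self_mem_nhdsWithin,
          Ioo_mem_nhdsLT_of_mem ⟨h, le_refl T⟩] with r hr1 hr2
        exact hlt r hr2.1.le hr1
    have hTS : T ∈ S := by
      refine ⟨⟨hT0, hTt⟩, fun r hr => ?_⟩
      rcases lt_or_eq_of_le hr.2 with h | h
      · exact hlt r hr.1 h
      · rw [h]; exact hyT
    -- show T = t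
    rcases eq_or_lt_of_le hTt with hTeq | hTlt
    · exact hTS.2 t ⟨ht, hTeq.ge⟩
    · exfalso
      -- y < 1/2 near T
      have hev : ∀ᶠ s in nhds T, y s < 1/2 :=
        (cont T hT0).eventually_lt continuousAt_const (lt_of_le_of_lt hyT h0)
      obtain ⟨δ, hδ0, hδ⟩ := Metric.eventually_nhds_iff.mp hev
      set u := min t (T + δ/2) with hu
      have hTu : T < u := lt_min hTlt (by linarith)
      have hu0 : 0 ≤ u := hT0.trans hTu.le
      have hut : u ≤ t := min_le_left _ _
      have huδ : u ≤ T + δ/2 := min_le_right _ _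
      have hanti : AntitoneOn y (Set.Icc T u) := by
        apply antitoneOn_of_deriv_nonpos (convex_Icc T u)
        · exact fun s hs => (cont s (hT0.trans hs.1)).continuousWithinAt
        · rw [interior_Icc]
          exact fun s hs => ((hderiv s (hT0.trans hs.1.le)).differentiableAt).differentiableWithinAt
        · rw [interior_Icc]
          intro s hs
          have hs0 : 0 ≤ s := hT0.trans hs.1.le
          have hy2 : y s < 1/2 := by
            apply hδ
            rw [Real.dist_eq, abs_lt]
            constructor <;> [linarith [hs.1]; linarith [hs.2, huδ]]
          rw [(hderiv s hs0).deriv]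
          have h1 := hineq s hs0
          have h2 := hz_nonneg s hs0
          nlinarith
      have huS : u ∈ S := by
        refine ⟨⟨hu0, hut⟩, fun r hr => ?_⟩
        rcases le_or_gt r T with h | h
        · exact hTS.2 r ⟨hr.1, h⟩
        · calc y r ≤ y T := hanti ⟨le_refl T, hTu.le⟩ ⟨h.le, hr.2⟩ h.le
            _ ≤ y 0 := hyT
      exact absurd (le_csSup hbdd huS) (not_le.mpr hTu)
  intro t ht
  exact ⟨key t ht, lt_of_le_of_lt (key t ht) h0⟩
end

section
/- For integers k and m, the symbol p(k,m) = ik(|k||k−m|³ − k(k−m)³) is nonzero only when 0 < |k| < |m|, and in that case |p(k,m)| ≤ 2|m|²|k−m|³. -/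
/-! Write `p(k,m) = i k (|x| - x)` with `x = k (k - m)³`. If `p ≠ 0` then `k ≠ 0` and `x < 0`, so
`k` and `k - m` have opposite signs, which forces `|k| < |m|`; moreover `|x| - x = 2|k||k - m|³`,
whence `|p| = 2|k|²|k - m|³ ≤ 2|m|²|k - m|³`. -/

lemma neg_of_abs_sub_self_ne_zero {G : Type*} [AddCommGroup G] [LinearOrder G]
    [IsOrderedAddMonoid G] {x : G} (h : |x| - x ≠ 0) : x < 0 :=
  not_le.mp fun hx => h (sub_eq_zero.mpr (abs_of_nonneg hx))

lemma abs_lt_abs_of_mul_sub_pow_neg {α : Type*} [CommRing α] [LinearOrder α]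
    [IsStrictOrderedRing α] {a m : α} {n : ℕ} (hn : Odd n) (h : a * (a - m) ^ n < 0) :
    |a| < |m| := by
  rcases mul_neg_iff.mp h with ⟨ha, hpow⟩ | ⟨ha, hpow⟩
  · have : a - m < 0 := hn.pow_neg_iff.mp hpow
    rw [abs_of_pos ha, abs_of_pos (by linarith : 0 < m)]
    linarith
  · have : 0 < a - m := hn.pow_pos_iff.mp hpow
    rw [abs_of_neg ha, abs_of_neg (by linarith : m < 0)]
    linarith

/-- The capillarity symbol p(k,m) = ik(|k||k−m|³ − k(k−m)³) is nonzero only when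
0 < |k| < |m|, and then |p(k,m)| ≤ 2|m|²|k−m|³. -/
theorem stmt_13 (k m : ℤ)
    (h : Complex.I * (k : ℂ) * (((|k| * |k - m| ^ 3 : ℤ) : ℂ) - ((k * (k - m) ^ 3 : ℤ) : ℂ)) ≠ 0) :
    (0 < |k| ∧ |k| < |m|) ∧
      ‖(Complex.I * (k : ℂ) *
            (((|k| * |k - m| ^ 3 : ℤ) : ℂ) - ((k * (k - m) ^ 3 : ℤ) : ℂ)))‖ ≤
        ((2 * |m| ^ 2 * |k - m| ^ 3 : ℤ) : ℝ) := by
  have habs : |k| * |k - m| ^ 3 = |k * (k - m) ^ 3| := by rw [abs_mul, abs_pow]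
  rw [habs, ← Int.cast_sub] at h ⊢
  obtain ⟨hk, hA⟩ : (k : ℂ) ≠ 0 ∧ ((|k * (k - m) ^ 3| - k * (k - m) ^ 3 : ℤ) : ℂ) ≠ 0 := by
    simpa [Complex.I_ne_zero] using h
  have hneg : k * (k - m) ^ 3 < 0 := neg_of_abs_sub_self_ne_zero (by exact_mod_cast hA)
  have hkm : |k| < |m| := abs_lt_abs_of_mul_sub_pow_neg (by decide) hneg
  refine ⟨⟨abs_pos.mpr (by exact_mod_cast hk), hkm⟩, ?_⟩
  have hsymbol : |k * (k - m) ^ 3| - k * (k - m) ^ 3 = 2 * (|k| * |k - m| ^ 3) := by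
    rw [habs, abs_of_neg hneg]; ring
  have hbound : |k| * (2 * (|k| * |k - m| ^ 3)) ≤ 2 * |m| ^ 2 * |k - m| ^ 3 := by
    have hsq : |k| ^ 2 ≤ |m| ^ 2 := pow_le_pow_left₀ (abs_nonneg k) hkm.le 2
    nlinarith [pow_nonneg (abs_nonneg (k - m)) 3]
  rw [hsymbol, norm_mul, norm_mul, Complex.norm_I, one_mul, Complex.norm_intCast,
    Complex.norm_intCast, ← Int.cast_abs, ← Int.cast_abs, ← Int.cast_mul,
    abs_of_nonneg (by positivity : (0 : ℤ) ≤ 2 * (|k| * |k - m| ^ 3))]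
  exact_mod_cast hbound
end

section
/- There is an absolute constant C such that for all smooth mean-free g, h on the torus, |N(g,h,h)| ≤ C ‖g‖_{H^{3/2}} ‖h‖_{H^{1/2}}², where N(g,h₁,h₂) = ∫_T g·(H−1)∂ₓh₁·(H+1)∂ₓh₂ dx. -/
open Complex

namespace Stmt15Aux

open Finset

noncomputable def cc (hhat : ℤ → ℂ) (m : ℤ) : ℝ := Real.sqrt (|m| : ℝ) * ‖hhat m‖

noncomputable def GG (ghat : ℤ → ℂ) (n : ℤ) : ℝ := Real.sqrt ((|n| : ℝ) ^ (3 : ℝ)) * ‖ghat n‖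

noncomputable def qq (hhat : ℤ → ℂ) (n m : ℤ) : ℝ :=
  if m.sign = (n - m).sign ∧ m ≠ 0 then
    Real.sqrt (min (|m| : ℝ) (|n - m| : ℝ)) * cc hhat m * cc hhat (n - m) / (|n| : ℝ)
  else 0

lemma cc_nonneg (hhat : ℤ → ℂ) (m : ℤ) : 0 ≤ cc hhat m := by
  unfold cc; positivity

lemma GG_nonneg (ghat : ℤ → ℂ) (n : ℤ) : 0 ≤ GG ghat n := by
  unfold GG; positivity

lemma qq_nonneg (hhat : ℤ → ℂ) (n m : ℤ) : 0 ≤ qq hhat n m := by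
  unfold qq
  split_ifs with h
  · have := cc_nonneg hhat m
    have := cc_nonneg hhat (n - m)
    positivity
  · exact le_refl 0

lemma sign_facts {m k : ℤ} (h : m.sign = k.sign) (hm : m ≠ 0) :
    k ≠ 0 ∧ |m + k| = |m| + |k| := by
  rcases lt_trichotomy m 0 with h1|h1|h1
  · have hk : k < 0 := by
      rw [Int.sign_eq_neg_one_of_neg h1] at h
      exact Int.sign_eq_neg_one_iff_neg.mp h.symm
    exact ⟨by omega, by rw [abs_of_neg h1, abs_of_neg hk, abs_of_neg (by omega)]; try ring⟩
  · exact absurd h1 hm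
  · have hk : 0 < k := by
      rw [Int.sign_eq_one_of_pos h1] at h
      exact Int.sign_eq_one_iff_pos.mp h.symm
    exact ⟨by omega, by rw [abs_of_pos h1, abs_of_pos hk, abs_of_pos (by omega)]; try ring⟩

lemma natsum (M : ℕ) (hM : M ≠ 0) (A : Finset ℕ) :
    ∑ j ∈ A, (if M < j then (M : ℝ) / (j : ℝ) ^ 2 else 0) ≤ 1 := by
  rw [Finset.sum_ite, Finset.sum_const_zero, add_zero]
  set L := A.sup id ⊔ M with hL
  have hsub : A.filter (fun j => M < j) ⊆ Ioc M L := by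
    intro j hj
    rw [mem_filter] at hj
    rw [mem_Ioc]
    exact ⟨hj.2, le_sup_left.trans' (le_sup (f := id) hj.1)⟩
  calc ∑ j ∈ A.filter (fun j => M < j), (M : ℝ) / (j : ℝ) ^ 2
      ≤ ∑ j ∈ Ioc M L, (M : ℝ) / (j : ℝ) ^ 2 := by
        apply sum_le_sum_of_subset_of_nonneg hsub
        intro j _ _
        positivity
    _ = (M : ℝ) * ∑ j ∈ Ioc M L, ((j : ℝ) ^ 2)⁻¹ := by
        rw [mul_sum]; apply sum_congr rfl; intro j _; rw [div_eq_mul_inv]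
    _ ≤ (M : ℝ) * ((M : ℝ)⁻¹ - (L : ℝ)⁻¹) := by
        apply mul_le_mul_of_nonneg_left (sum_Ioc_inv_sq_le_sub hM le_sup_right) (by positivity)
    _ ≤ (M : ℝ) * (M : ℝ)⁻¹ := by
        apply mul_le_mul_of_nonneg_left _ (by positivity)
        have : (0:ℝ) ≤ (L:ℝ)⁻¹ := by positivity
        linarith
    _ = 1 := by
        rw [mul_inv_cancel₀]
        exact_mod_cast hM

lemma tail (m : ℤ) (hm : m ≠ 0) (S : Finset ℤ) :
    ∑ n ∈ S, (if |m| < |n| then ((|m| : ℤ) : ℝ) / ((|n| : ℤ) : ℝ) ^ 2 else 0) ≤ 2 := by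
  set M := m.natAbs with hMdef
  have hM : M ≠ 0 := by omega
  have hrw : ∀ n : ℤ, (if |m| < |n| then ((|m| : ℤ) : ℝ) / ((|n| : ℤ) : ℝ) ^ 2 else 0)
      = (if M < n.natAbs then (M : ℝ) / (n.natAbs : ℝ) ^ 2 else 0) := by
    intro n
    have h1 : (|m| : ℤ) = (M : ℤ) := Int.abs_eq_natAbs m
    have h2 : (|n| : ℤ) = (n.natAbs : ℤ) := Int.abs_eq_natAbs n
    rw [h1, h2]
    simp only [Nat.cast_lt, Int.cast_natCast]
  simp only [hrw]
  have hsplit := Finset.sum_filter_add_sum_filter_not S (fun n => 0 < n)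
    (fun n => if M < n.natAbs then (M : ℝ) / (n.natAbs : ℝ) ^ 2 else 0)
  rw [← hsplit]
  have key : ∀ (B : Finset ℤ), (∀ a ∈ B, ∀ b ∈ B, a.natAbs = b.natAbs → a = b) →
      ∑ n ∈ B, (if M < n.natAbs then (M : ℝ) / (n.natAbs : ℝ) ^ 2 else 0) ≤ 1 := by
    intro B hinj
    rw [← Finset.sum_image (f := fun j => if M < j then (M : ℝ) / (j : ℝ) ^ 2 else 0)
      (g := Int.natAbs) hinj]
    exact natsum M hM _
  have h1 := key (S.filter (fun n => 0 < n)) (by intro a ha b hb; rw [mem_filter] at ha hb; omega)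
  have h2 := key (S.filter (fun n => ¬ 0 < n)) (by intro a ha b hb; rw [mem_filter] at ha hb; omega)
  linarith

lemma point (ghat hhat : ℤ → ℂ) (m k : ℤ) :
    ‖starRingEnd ℂ (ghat (m + k)) * (m : ℂ) * (k : ℂ) * hhat m * hhat k *
        (1 + (Int.sign m : ℂ) * (Int.sign k : ℂ))‖ ≤
      2 * (GG ghat (m + k) * qq hhat (m + k) m) := by
  have hq : qq hhat (m + k) m = if m.sign = k.sign ∧ m ≠ 0 then
      Real.sqrt (min (|m| : ℝ) (|k| : ℝ)) * cc hhat m * cc hhat k / |((m + k : ℤ) : ℝ)|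
      else 0 := by
    simp [qq, add_sub_cancel_left]
  by_cases hcond : m.sign = k.sign ∧ m ≠ 0
  · obtain ⟨hs, hm⟩ := hcond
    obtain ⟨hk, habs⟩ := sign_facts hs hm
    have hmpos : (0:ℤ) < |m| := abs_pos.mpr hm
    have hkpos : (0:ℤ) < |k| := abs_pos.mpr hk
    have hnpos : (0:ℤ) < |m + k| := by rw [habs]; linarith
    have hn0 : m + k ≠ 0 := by
      intro h; rw [h] at hnpos; simp at hnpos
    have hss : (1 + (Int.sign m : ℂ) * (Int.sign k : ℂ)) = 2 := by
      rcases lt_trichotomy m 0 with h1|h1|h1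
      · have h2 : k < 0 := Int.sign_eq_neg_one_iff_neg.mp
          (hs.symm.trans (Int.sign_eq_neg_one_of_neg h1))
        rw [Int.sign_eq_neg_one_of_neg h1, Int.sign_eq_neg_one_of_neg h2]
        norm_num
      · exact absurd h1 hm
      · have h2 : 0 < k := Int.sign_eq_one_iff_pos.mp
          (hs.symm.trans (Int.sign_eq_one_of_pos h1))
        rw [Int.sign_eq_one_of_pos h1, Int.sign_eq_one_of_pos h2]
        norm_num
    rw [hss, hq, if_pos ⟨hs, hm⟩]
    simp only [norm_mul, RCLike.norm_conj, Complex.norm_intCast, Complex.norm_ofNat]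
    unfold GG cc
    set N : ℝ := |((m + k : ℤ) : ℝ)| with hN
    set M : ℝ := |((m : ℤ) : ℝ)| with hM
    set K : ℝ := |((k : ℤ) : ℝ)| with hK
    have hM0 : 0 ≤ M := abs_nonneg _
    have hK0 : 0 ≤ K := abs_nonneg _
    have hN0 : (0:ℝ) < N := by
      rw [hN]; exact abs_pos.mpr (Int.cast_ne_zero.mpr hn0)
    have hmin0 : 0 ≤ min M K := le_min hM0 hK0
    have hint : |m| * |k| ≤ |m + k| * min |m| |k| := by
      rw [habs]
      rcases min_cases |m| |k| with ⟨h,h'⟩|⟨h,h'⟩ <;> rw [h] <;> nlinarith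
    have prod : M * K ≤ N * min M K := by
      rw [hM, hK, hN]
      exact_mod_cast hint
    have h3 : Real.sqrt (N ^ (3:ℝ)) = N * Real.sqrt N := by
      rw [show N ^ (3:ℝ) = N^2 * N by
        rw [show (3:ℝ) = ((3:ℕ):ℝ) by norm_num, Real.rpow_natCast]; ring,
        Real.sqrt_mul (sq_nonneg N), Real.sqrt_sq hN0.le]
    have core : M * K ≤ Real.sqrt N * (Real.sqrt (min M K) * (Real.sqrt M * Real.sqrt K)) := by
      rw [← Real.sqrt_mul hM0, ← Real.sqrt_mul hmin0, ← Real.sqrt_mul hN0.le]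
      apply Real.le_sqrt_of_sq_le
      nlinarith [mul_nonneg hM0 hK0]
    set a := ‖ghat (m + k)‖
    set b := ‖hhat m‖
    set c := ‖hhat k‖
    have ha : 0 ≤ a := norm_nonneg _
    have hb : 0 ≤ b := norm_nonneg _
    have hc : 0 ≤ c := norm_nonneg _
    calc a * M * K * b * c * 2
        = (2 * a * b * c) * (M * K) := by ring
      _ ≤ (2 * a * b * c) * (Real.sqrt N * (Real.sqrt (min M K) * (Real.sqrt M * Real.sqrt K))) :=
          mul_le_mul_of_nonneg_left core (by positivity)
      _ = 2 * (Real.sqrt (N ^ (3:ℝ)) * a *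
            (Real.sqrt (min M K) * (Real.sqrt M * b) * (Real.sqrt K * c) / N)) := by
          rw [h3]; field_simp
  · rw [hq, if_neg hcond, mul_zero, mul_zero]
    apply le_of_eq
    rw [norm_eq_zero]
    by_cases hm : m = 0
    · simp [hm]
    by_cases hk : k = 0
    · simp [hk]
    have hs : m.sign ≠ k.sign := by tauto
    have hz : (1 + (Int.sign m : ℂ) * (Int.sign k : ℂ)) = 0 := by
      rcases lt_trichotomy m 0 with h1|h1|h1
      · rcases lt_trichotomy k 0 with h2|h2|h2
        · exact absurd (by rw [Int.sign_eq_neg_one_of_neg h1, Int.sign_eq_neg_one_of_neg h2]) hs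
        · exact absurd h2 hk
        · rw [Int.sign_eq_neg_one_of_neg h1, Int.sign_eq_one_of_pos h2]; push_cast; ring
      · exact absurd h1 hm
      · rcases lt_trichotomy k 0 with h2|h2|h2
        · rw [Int.sign_eq_one_of_pos h1, Int.sign_eq_neg_one_of_neg h2]; push_cast; ring
        · exact absurd h2 hk
        · exact absurd (by rw [Int.sign_eq_one_of_pos h1, Int.sign_eq_one_of_pos h2]) hs
    rw [hz, mul_zero]

end Stmt15Aux

open Stmt15Aux Finset Pointwise in
/-- Commutator estimate |N(g,h,h)| ≤ C ‖g‖_{H^{3/2}} ‖h‖_{H^{1/2}}², where, in Fourier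
variables, N(g,h,h) = Σ_{m+k=n} conj(ĝ n) m k ĥ(m) ĥ(k) (1 + sgn m sgn k) and
‖u‖_{H^s} = (Σ_n |n|^{2s} |û(n)|²)^{1/2} for mean-free u. -/
theorem stmt_15 :
    ∃ C : ℝ, 0 < C ∧ ∀ ghat hhat : ℤ → ℂ,
      (Function.support ghat).Finite → (Function.support hhat).Finite →
      ghat 0 = 0 → hhat 0 = 0 →
      ‖∑' p : ℤ × ℤ,
          starRingEnd ℂ (ghat (p.1 + p.2)) * (p.1 : ℂ) * (p.2 : ℂ) * hhat p.1 * hhat p.2 *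
            (1 + (Int.sign p.1 : ℂ) * (Int.sign p.2 : ℂ))‖ ≤
        C * Real.sqrt (∑' n : ℤ, (|n| : ℝ) ^ (3 : ℝ) * ‖ghat n‖ ^ 2) *
          (∑' n : ℤ, (|n| : ℝ) ^ (1 : ℝ) * ‖hhat n‖ ^ 2) := by
  classical
  refine ⟨4, by norm_num, ?_⟩
  intro ghat hhat gfin hfin g0 h0
  set T : Finset ℤ := hfin.toFinset with hTdef
  have hTmem : ∀ x : ℤ, x ∉ T → hhat x = 0 := by
    intro x hx
    by_contra h
    exact hx (hfin.mem_toFinset.mpr h)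
  have sumg : Summable (fun n : ℤ => (|n| : ℝ) ^ (3:ℝ) * ‖ghat n‖ ^ 2) := by
    apply summable_of_ne_finset_zero (s := gfin.toFinset)
    intro n hn
    have : ghat n = 0 := by
      by_contra h; exact hn (gfin.mem_toFinset.mpr h)
    simp [this]
  have sumh : Summable (fun n : ℤ => (|n| : ℝ) ^ (1:ℝ) * ‖hhat n‖ ^ 2) := by
    apply summable_of_ne_finset_zero (s := T)
    intro n hn; simp [hTmem n hn]
  set Cg := ∑' n : ℤ, (|n| : ℝ) ^ (3:ℝ) * ‖ghat n‖ ^ 2 with hCg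
  set Ch := ∑' n : ℤ, (|n| : ℝ) ^ (1:ℝ) * ‖hhat n‖ ^ 2 with hCh
  have hCg0 : 0 ≤ Cg := tsum_nonneg (fun n => by positivity)
  have hCh0 : 0 ≤ Ch := tsum_nonneg (fun n => by positivity)
  have hcc2 : ∀ x : ℤ, cc hhat x ^ 2 = (|x| : ℝ) ^ (1:ℝ) * ‖hhat x‖ ^ 2 := by
    intro x
    simp only [cc, mul_pow]
    rw [Real.sq_sqrt (abs_nonneg _), Real.rpow_one]
  have hGG2 : ∀ n : ℤ, GG ghat n ^ 2 = (|n| : ℝ) ^ (3:ℝ) * ‖ghat n‖ ^ 2 := by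
    intro n
    simp only [GG, mul_pow]
    rw [Real.sq_sqrt (by positivity)]
  have hccsum : ∀ n : ℤ, ∑ m ∈ T, cc hhat (n - m) ^ 2 ≤ Ch := by
    intro n
    rw [← Finset.sum_image (f := fun x => cc hhat x ^ 2) (g := fun m => n - m)
      (by intro a _ b _ h; simp only at h; omega)]
    calc ∑ x ∈ T.image (fun m => n - m), cc hhat x ^ 2
        = ∑ x ∈ T.image (fun m => n - m), (|x| : ℝ) ^ (1:ℝ) * ‖hhat x‖ ^ 2 :=
          Finset.sum_congr rfl (fun x _ => hcc2 x)
      _ ≤ Ch := Summable.sum_le_tsum _ (fun x _ => by positivity) sumh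
  have hccsum' : ∑ m ∈ T, cc hhat m ^ 2 ≤ Ch := by
    calc ∑ m ∈ T, cc hhat m ^ 2
        = ∑ m ∈ T, (|m| : ℝ) ^ (1:ℝ) * ‖hhat m‖ ^ 2 :=
          Finset.sum_congr rfl (fun m _ => hcc2 m)
      _ ≤ Ch := Summable.sum_le_tsum _ (fun x _ => by positivity) sumh
  set kap : ℤ → ℤ → ℝ := fun n m =>
    if m.sign = (n - m).sign ∧ m ≠ 0 then
      (min (|m| : ℝ) (|n - m| : ℝ)) / (|n| : ℝ) ^ 2 else 0 with hkap
  have cs2 : ∀ n : ℤ, (∑ m ∈ T, qq hhat n m) ^ 2 ≤ (∑ m ∈ T, kap n m * cc hhat m ^ 2) * Ch := by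
    intro n
    set A : ℤ → ℝ := fun m =>
      (if m.sign = (n - m).sign ∧ m ≠ 0 then
        Real.sqrt (min (|m| : ℝ) (|n - m| : ℝ)) / (|n| : ℝ) else 0) * cc hhat m with hA
    set B : ℤ → ℝ := fun m => cc hhat (n - m) with hB
    have hAB : ∀ m : ℤ, qq hhat n m = A m * B m := by
      intro m
      simp only [qq, hA, hB]
      split_ifs with h
      · ring
      · ring
    have hA2 : ∀ m : ℤ, A m ^ 2 = kap n m * cc hhat m ^ 2 := by
      intro m
      simp only [hA, hkap, mul_pow]
      split_ifs with h
      · rw [div_pow, Real.sq_sqrt (le_min (abs_nonneg _) (abs_nonneg _))]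
      · norm_num
    calc (∑ m ∈ T, qq hhat n m) ^ 2
        = (∑ m ∈ T, A m * B m) ^ 2 := by
          rw [Finset.sum_congr rfl (fun m _ => hAB m)]
      _ ≤ (∑ m ∈ T, A m ^ 2) * (∑ m ∈ T, B m ^ 2) :=
          Finset.sum_mul_sq_le_sq_mul_sq T A B
      _ ≤ (∑ m ∈ T, kap n m * cc hhat m ^ 2) * Ch := by
          rw [Finset.sum_congr rfl (fun m _ => hA2 m)]
          apply mul_le_mul_of_nonneg_left (hccsum n)
          apply Finset.sum_nonneg
          intro m _
          have h1 : 0 ≤ kap n m := by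
            simp only [hkap]
            split_ifs with h
            · positivity
            · exact le_refl 0
          have h2 := cc_nonneg hhat m
          positivity
  have hkapsum : ∀ m : ℤ, ∑ n ∈ (T + T), kap n m ≤ 2 := by
    intro m
    by_cases hm : m = 0
    · simp [hkap, hm]
    calc ∑ n ∈ (T + T), kap n m
        ≤ ∑ n ∈ (T + T), (if |m| < |n| then ((|m| : ℤ) : ℝ) / ((|n| : ℤ) : ℝ) ^ 2 else 0) := by
          apply sum_le_sum
          intro n _
          simp only [hkap]
          split_ifs with h1 h2
          · -- same sign: |n| = |m| + |n-m|, n-m ≠ 0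
            obtain ⟨hk0, habs⟩ := sign_facts h1.1 h1.2
            rw [show m + (n - m) = n by ring] at habs
            have habs' : (0:ℤ) < |n| := by
              have h3 := abs_pos.mpr h1.2
              have h4 := abs_nonneg (n - m)
              omega
            have hn0 : n ≠ 0 := abs_pos.mp habs'
            have hd : (0:ℝ) < (|n| : ℝ) ^ 2 :=
              pow_pos (abs_pos.mpr (Int.cast_ne_zero.mpr hn0)) 2
            push_cast
            exact (div_le_div_iff_of_pos_right hd).mpr (min_le_left _ _)
          · -- cond true but |m| < |n| false: contradiction
            exfalso
            obtain ⟨hk0, habs⟩ := sign_facts h1.1 h1.2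
            rw [show m + (n - m) = n by ring] at habs
            have := abs_pos.mpr hk0
            have := abs_pos.mpr h1.2
            omega
          · positivity
          · exact le_refl 0
      _ ≤ 2 := tail m hm (T + T)
  have hGsum : ∑ n ∈ (T + T), GG ghat n ^ 2 ≤ Cg := by
    calc ∑ n ∈ (T + T), GG ghat n ^ 2
        = ∑ n ∈ (T + T), (|n| : ℝ) ^ (3:ℝ) * ‖ghat n‖ ^ 2 :=
          Finset.sum_congr rfl (fun n _ => hGG2 n)
      _ ≤ Cg := Summable.sum_le_tsum _ (fun x _ => by positivity) sumg
  have hPsum : ∑ n ∈ (T + T), (∑ m ∈ T, qq hhat n m) ^ 2 ≤ 2 * Ch ^ 2 := by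
    calc ∑ n ∈ (T + T), (∑ m ∈ T, qq hhat n m) ^ 2
        ≤ ∑ n ∈ (T + T), (∑ m ∈ T, kap n m * cc hhat m ^ 2) * Ch :=
          sum_le_sum (fun n _ => cs2 n)
      _ = (∑ m ∈ T, cc hhat m ^ 2 * ∑ n ∈ (T + T), kap n m) * Ch := by
          rw [← Finset.sum_mul]
          congr 1
          rw [Finset.sum_comm]
          apply sum_congr rfl; intro m _
          rw [Finset.mul_sum]
          apply sum_congr rfl; intro n _; ring
      _ ≤ (∑ m ∈ T, cc hhat m ^ 2 * 2) * Ch := by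
          apply mul_le_mul_of_nonneg_right _ hCh0
          apply sum_le_sum
          intro m _
          have hcm := cc_nonneg hhat m
          exact mul_le_mul_of_nonneg_left (hkapsum m) (by positivity)
      _ ≤ 2 * Ch ^ 2 := by
          have : ∑ m ∈ T, cc hhat m ^ 2 * 2 = 2 * ∑ m ∈ T, cc hhat m ^ 2 := by
            rw [Finset.mul_sum]; apply sum_congr rfl; intro m _; ring
          rw [this]
          calc (2 * ∑ m ∈ T, cc hhat m ^ 2) * Ch ≤ (2 * Ch) * Ch := by
                apply mul_le_mul_of_nonneg_right _ hCh0
                linarith [hccsum']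
            _ = 2 * Ch ^ 2 := by ring
  have hsupp : ∀ p : ℤ × ℤ, p ∉ T ×ˢ T →
      starRingEnd ℂ (ghat (p.1 + p.2)) * (p.1 : ℂ) * (p.2 : ℂ) * hhat p.1 * hhat p.2 *
        (1 + (Int.sign p.1 : ℂ) * (Int.sign p.2 : ℂ)) = 0 := by
    intro p hp
    rw [Finset.mem_product] at hp
    push_neg at hp
    by_cases h1 : p.1 ∈ T
    · simp [hTmem p.2 (hp h1)]
    · simp [hTmem p.1 h1]
  rw [tsum_eq_sum hsupp]
  have hinj : ∀ p ∈ T ×ˢ T, ∀ q ∈ T ×ˢ T,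
      (fun p : ℤ × ℤ => (p.1 + p.2, p.1)) p = (fun p : ℤ × ℤ => (p.1 + p.2, p.1)) q → p = q := by
    intro p _ q _ h
    simp only [Prod.mk.injEq] at h
    exact Prod.ext (by omega) (by omega)
  calc ‖∑ p ∈ T ×ˢ T, starRingEnd ℂ (ghat (p.1 + p.2)) * (p.1 : ℂ) * (p.2 : ℂ) * hhat p.1 *
          hhat p.2 * (1 + (Int.sign p.1 : ℂ) * (Int.sign p.2 : ℂ))‖
      ≤ ∑ p ∈ T ×ˢ T, ‖starRingEnd ℂ (ghat (p.1 + p.2)) * (p.1 : ℂ) * (p.2 : ℂ) * hhat p.1 *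
          hhat p.2 * (1 + (Int.sign p.1 : ℂ) * (Int.sign p.2 : ℂ))‖ := norm_sum_le _ _
    _ ≤ ∑ p ∈ T ×ˢ T, 2 * (GG ghat (p.1 + p.2) * qq hhat (p.1 + p.2) p.1) :=
        sum_le_sum (fun p _ => point ghat hhat p.1 p.2)
    _ = ∑ p ∈ (T ×ˢ T).image (fun p : ℤ × ℤ => (p.1 + p.2, p.1)),
          2 * (GG ghat p.1 * qq hhat p.1 p.2) := by
        rw [Finset.sum_image hinj]
    _ ≤ ∑ p ∈ (T + T) ×ˢ T, 2 * (GG ghat p.1 * qq hhat p.1 p.2) := by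
        apply sum_le_sum_of_subset_of_nonneg
        · intro p hp
          simp only [Finset.mem_image, Finset.mem_product] at hp ⊢
          obtain ⟨q, hq, rfl⟩ := hp
          exact ⟨Finset.add_mem_add hq.1 hq.2, hq.1⟩
        · intro p _ _
          have := GG_nonneg ghat p.1
          have := qq_nonneg hhat p.1 p.2
          positivity
    _ = ∑ n ∈ (T + T), ∑ m ∈ T, 2 * (GG ghat n * qq hhat n m) := by rw [Finset.sum_product]
    _ = 2 * ∑ n ∈ (T + T), GG ghat n * ∑ m ∈ T, qq hhat n m := by
        rw [Finset.mul_sum]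
        apply sum_congr rfl; intro n _
        rw [Finset.mul_sum, Finset.mul_sum]
    _ ≤ 2 * (Real.sqrt (∑ n ∈ (T + T), GG ghat n ^ 2) *
          Real.sqrt (∑ n ∈ (T + T), (∑ m ∈ T, qq hhat n m) ^ 2)) :=
        mul_le_mul_of_nonneg_left (Real.sum_mul_le_sqrt_mul_sqrt _ _ _) (by norm_num)
    _ ≤ 2 * (Real.sqrt Cg * Real.sqrt (2 * Ch ^ 2)) := by
        apply mul_le_mul_of_nonneg_left _ (by norm_num)
        exact mul_le_mul (Real.sqrt_le_sqrt hGsum) (Real.sqrt_le_sqrt hPsum)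
          (Real.sqrt_nonneg _) (Real.sqrt_nonneg _)
    _ ≤ 4 * Real.sqrt Cg * Ch := by
        rw [Real.sqrt_mul (by norm_num : (0:ℝ) ≤ 2), Real.sqrt_sq hCh0]
        have h2 : Real.sqrt 2 ≤ 2 := by
          refine (Real.sqrt_le_sqrt (by norm_num : (2:ℝ) ≤ 4)).trans_eq ?_
          rw [show (4:ℝ) = 2 ^ 2 by norm_num, Real.sqrt_sq (by norm_num : (0:ℝ) ≤ 2)]
        nlinarith [Real.sqrt_nonneg Cg, mul_nonneg (Real.sqrt_nonneg Cg) hCh0]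
end

section
/- There is an absolute constant C such that for all smooth mean-free g, h on the torus and all ν > 0, |M(g,h,h)| ≤ C ν ‖g‖_{H²} ‖h‖_{H^{1/2}}^{1/2} ‖h‖_{H^{3/2}}^{3/2}, where M(g,h₁,h₂) = ν ∫_T g (Λ³h₁ · Λh₂ + ∂ₓ³h₁ · ∂ₓh₂) dx. -/
open Finset

/-!
Only pairs with `k` strictly between `0` and `n`, i.e. `0 < k * (n - k)`, contribute, and for them
`|n - k|³|k| ≤ n²|n - k||k|`. Moving the weight `(|n - k||k|)^(-1/4)` onto the `ĝ` factor,
Cauchy–Schwarz bounds the sum by `‖g‖_{H²} ‖h‖_{H^{5/4}}²` times the square root of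
`sup_n ∑_{0<k<n} (|n - k||k|)^(-1/2) ≤ 4`; this is the Fourier-side form of `H^{5/4} ⊂ Ẇ^{1,4}`.
Hölder's inequality then interpolates `‖h‖_{H^{5/4}}² ≤ ‖h‖_{H^{1/2}}^{1/2} ‖h‖_{H^{3/2}}^{3/2}`.
-/

lemma inv_sqrt_succ_le (n : ℕ) : (√(n + 1 : ℝ))⁻¹ ≤ 2 * (√(n + 1 : ℝ) - √n) := by
  have ha : 0 < √(n + 1 : ℝ) := by positivity
  have hab : √(n + 1 : ℝ) * √n ≤ n + 1 / 2 := by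
    nlinarith [sq_nonneg (√(n + 1 : ℝ) - √n), Real.sq_sqrt (n.cast_nonneg (α := ℝ)),
      Real.sq_sqrt (by positivity : (0 : ℝ) ≤ n + 1)]
  rw [inv_le_iff_one_le_mul₀' ha]
  nlinarith [Real.sq_sqrt (by positivity : (0 : ℝ) ≤ n + 1)]

lemma sum_range_inv_sqrt_le (N : ℕ) : ∑ i ∈ range (N + 1), (√(i : ℝ))⁻¹ ≤ 2 * √N := by
  induction N with
  | zero => simp
  | succ N ih =>
    rw [sum_range_succ]
    push_cast
    linarith [inv_sqrt_succ_le N]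

lemma inv_sqrt_mul_inv_sqrt_le {a b : ℝ} (ha : 0 ≤ a) (hb : 0 ≤ b) :
    (√a)⁻¹ * (√b)⁻¹ ≤ ((√a)⁻¹ + (√b)⁻¹) / √(a + b) := by
  rcases ha.eq_or_lt with rfl | ha
  · simp only [Real.sqrt_zero, inv_zero, zero_mul]; positivity
  rcases hb.eq_or_lt with rfl | hb
  · simp only [Real.sqrt_zero, inv_zero, mul_zero]; positivity
  have hsub : √(a + b) ≤ √a + √b := by
    refine Real.sqrt_le_iff.2 ⟨by positivity, ?_⟩
    nlinarith [Real.sq_sqrt ha.le, Real.sq_sqrt hb.le,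
      mul_nonneg (Real.sqrt_nonneg a) (Real.sqrt_nonneg b)]
  rw [le_div_iff₀ (by positivity)]
  calc (√a)⁻¹ * (√b)⁻¹ * √(a + b) ≤ (√a)⁻¹ * (√b)⁻¹ * (√a + √b) := by gcongr
    _ = (√a)⁻¹ + (√b)⁻¹ := by field_simp; ring

-- The endpoint terms vanish because `(√0)⁻¹ = 0`.
lemma sum_antidiagonal_inv_sqrt_mul_inv_sqrt_le (N : ℕ) :
    ∑ p ∈ antidiagonal N, (√(p.1 : ℝ))⁻¹ * (√(p.2 : ℝ))⁻¹ ≤ 4 := by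
  rcases N.eq_zero_or_pos with rfl | hN
  · simp
  have hN' : 0 < √(N : ℝ) := by positivity
  have hhalf : ∑ p ∈ antidiagonal N, (√(p.1 : ℝ))⁻¹ ≤ 2 * √N := by
    simpa only [Nat.sum_antidiagonal_eq_sum_range_succ (fun i _ => (√(i : ℝ))⁻¹)]
      using sum_range_inv_sqrt_le N
  calc ∑ p ∈ antidiagonal N, (√(p.1 : ℝ))⁻¹ * (√(p.2 : ℝ))⁻¹
      ≤ ∑ p ∈ antidiagonal N, ((√(p.1 : ℝ))⁻¹ + (√(p.2 : ℝ))⁻¹) / √N := by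
        refine sum_le_sum fun p hp => ?_
        have : (p.1 : ℝ) + p.2 = N := by exact_mod_cast mem_antidiagonal.1 hp
        simpa only [this] using inv_sqrt_mul_inv_sqrt_le p.1.cast_nonneg p.2.cast_nonneg
    _ = 2 * (∑ p ∈ antidiagonal N, (√(p.1 : ℝ))⁻¹) / √N := by
        rw [← sum_div, sum_add_distrib, two_mul,
          ← Nat.sum_antidiagonal_swap (f := fun p => (√(p.1 : ℝ))⁻¹)]
        rfl
    _ ≤ 2 * (2 * √N) / √N := by gcongr
    _ = 4 := by field_simp; ring

lemma sum_filter_inv_sqrt_mul_inv_sqrt_le (t : Finset ℤ) (n : ℤ) :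
    ∑ k ∈ t with 0 < k * (n - k), (√|((n - k : ℤ) : ℝ)|)⁻¹ * (√|(k : ℝ)|)⁻¹ ≤ 4 := by
  have hsplit : ∀ k, 0 < k * (n - k) → (n - k).natAbs + k.natAbs = n.natAbs := by
    intro k hk
    rcases pos_and_pos_or_neg_and_neg_of_mul_pos hk with ⟨h1, h2⟩ | ⟨h1, h2⟩ <;> omega
  have hinj : Set.InjOn (fun k : ℤ => ((n - k).natAbs, k.natAbs)) {k | 0 < k * (n - k)} := by
    intro k₁ hk₁ k₂ hk₂ h
    simp only [Set.mem_ofPred_eq, Prod.mk.injEq] at hk₁ hk₂ h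
    rcases pos_and_pos_or_neg_and_neg_of_mul_pos hk₁ with ⟨_, _⟩ | ⟨_, _⟩ <;>
      rcases pos_and_pos_or_neg_and_neg_of_mul_pos hk₂ with ⟨_, _⟩ | ⟨_, _⟩ <;> omega
  calc ∑ k ∈ t with 0 < k * (n - k), (√|((n - k : ℤ) : ℝ)|)⁻¹ * (√|(k : ℝ)|)⁻¹
      = ∑ p ∈ (t.filter fun k => 0 < k * (n - k)).image fun k => ((n - k).natAbs, k.natAbs),
          (√(p.1 : ℝ))⁻¹ * (√(p.2 : ℝ))⁻¹ := by
        rw [sum_image (s := t.filter fun k => 0 < k * (n - k))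
          fun k₁ h₁ k₂ h₂ => hinj (mem_filter.1 h₁).2 (mem_filter.1 h₂).2]
        simp only [Nat.cast_natAbs, Int.cast_abs]
    _ ≤ ∑ p ∈ antidiagonal n.natAbs, (√(p.1 : ℝ))⁻¹ * (√(p.2 : ℝ))⁻¹ := by
        refine sum_le_sum_of_subset_of_nonneg ?_ fun _ _ _ => by positivity
        intro p hp
        obtain ⟨k, hk, rfl⟩ := mem_image.1 hp
        exact mem_antidiagonal.2 (hsplit k (mem_filter.1 hk).2)
    _ ≤ 4 := sum_antidiagonal_inv_sqrt_mul_inv_sqrt_le _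

lemma sum_comp_sub_le {s t : Finset ℤ} {φ : ℤ → ℝ} (hφ : ∀ j ∈ t, 0 ≤ φ j)
    (ht : ∀ j ∉ t, φ j = 0) (k : ℤ) : ∑ n ∈ s, φ (n - k) ≤ ∑ j ∈ t, φ j := by
  calc ∑ n ∈ s, φ (n - k) = ∑ j ∈ s.map (Equiv.subRight k).toEmbedding, φ j := by simp
    _ = ∑ j ∈ s.map (Equiv.subRight k).toEmbedding with j ∈ t, φ j :=
        (sum_filter_of_ne fun j _ hj => by_contra fun hjt => hj (ht j hjt)).symm
    _ ≤ ∑ j ∈ t, φ j :=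
        sum_le_sum_of_subset_of_nonneg (fun j hj => (mem_filter.1 hj).2) fun j hj _ => hφ j hj

theorem sum_filter_mul_mul_le (s t : Finset ℤ) (G b : ℤ → ℝ) (hb : ∀ j ∉ t, b j = 0) :
    ∑ p ∈ s ×ˢ t with 0 < p.2 * (p.1 - p.2), G p.1 * b (p.1 - p.2) * b p.2 ≤
      2 * √(∑ n ∈ s, G n ^ 2) * ∑ j ∈ t, √|(j : ℝ)| * b j ^ 2 := by
  set P := (s ×ˢ t).filter fun p : ℤ × ℤ => 0 < p.2 * (p.1 - p.2)
  set w : ℤ → ℝ := fun j => √√|(j : ℝ)|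
  have hw_sq (j : ℤ) : w j ^ 2 = √|(j : ℝ)| := Real.sq_sqrt (Real.sqrt_nonneg _)
  have hw_ne {j : ℤ} (hj : j ≠ 0) : w j ≠ 0 := by positivity
  set U : ℤ × ℤ → ℝ := fun p => G p.1 * (w (p.1 - p.2) * w p.2)⁻¹
  set V : ℤ × ℤ → ℝ := fun p => w (p.1 - p.2) * b (p.1 - p.2) * (w p.2 * b p.2)
  have hUV : ∀ p ∈ P, G p.1 * b (p.1 - p.2) * b p.2 = U p * V p := by
    intro p hp
    have hpos := (mem_filter.1 hp).2
    have h1 := hw_ne (left_ne_zero_of_mul hpos.ne')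
    have h2 := hw_ne (right_ne_zero_of_mul hpos.ne')
    simp only [U, V]
    field_simp
  have hU : ∑ p ∈ P, U p ^ 2 ≤ 4 * ∑ n ∈ s, G n ^ 2 := by
    rw [sum_filter, sum_product, mul_sum]
    refine sum_le_sum fun n _ => ?_
    rw [← sum_filter]
    calc ∑ k ∈ t with 0 < k * (n - k), U (n, k) ^ 2
        = G n ^ 2 * ∑ k ∈ t with 0 < k * (n - k), (√|((n - k : ℤ) : ℝ)|)⁻¹ * (√|(k : ℝ)|)⁻¹ := by
          rw [mul_sum]
          refine sum_congr rfl fun k _ => ?_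
          simp only [U, mul_pow, inv_pow, hw_sq, mul_inv]
      _ ≤ G n ^ 2 * 4 := by gcongr; exact sum_filter_inv_sqrt_mul_inv_sqrt_le t n
      _ = 4 * G n ^ 2 := mul_comm _ _
  have hV : ∑ p ∈ P, V p ^ 2 ≤ (∑ j ∈ t, √|(j : ℝ)| * b j ^ 2) ^ 2 := by
    calc ∑ p ∈ P, V p ^ 2 ≤ ∑ p ∈ s ×ˢ t, V p ^ 2 :=
          sum_le_sum_of_subset_of_nonneg (filter_subset _ _) fun _ _ _ => sq_nonneg _
      _ = ∑ k ∈ t, (√|(k : ℝ)| * b k ^ 2) * ∑ n ∈ s, √|((n - k : ℤ) : ℝ)| * b (n - k) ^ 2 := by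
          rw [sum_product_right]
          refine sum_congr rfl fun k _ => ?_
          rw [mul_sum]
          refine sum_congr rfl fun n _ => ?_
          simp only [V, mul_pow, hw_sq]
          ring
      _ ≤ ∑ k ∈ t, (√|(k : ℝ)| * b k ^ 2) * ∑ j ∈ t, √|(j : ℝ)| * b j ^ 2 := by
          refine sum_le_sum fun k _ => mul_le_mul_of_nonneg_left ?_ (by positivity)
          exact sum_comp_sub_le (φ := fun j => √|(j : ℝ)| * b j ^ 2) (fun _ _ => by positivity)
            (fun j hj => by simp [hb j hj]) k
      _ = (∑ j ∈ t, √|(j : ℝ)| * b j ^ 2) ^ 2 := by rw [← sum_mul, sq]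
  calc ∑ p ∈ P, G p.1 * b (p.1 - p.2) * b p.2 = ∑ p ∈ P, U p * V p := sum_congr rfl hUV
    _ ≤ √(∑ p ∈ P, U p ^ 2) * √(∑ p ∈ P, V p ^ 2) := Real.sum_mul_le_sqrt_mul_sqrt _ _ _
    _ ≤ √(4 * ∑ n ∈ s, G n ^ 2) * √((∑ j ∈ t, √|(j : ℝ)| * b j ^ 2) ^ 2) := by gcongr
    _ = 2 * √(∑ n ∈ s, G n ^ 2) * ∑ j ∈ t, √|(j : ℝ)| * b j ^ 2 := by
        rw [Real.sqrt_mul (by norm_num), Real.sqrt_sq (sum_nonneg fun _ _ => by positivity),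
          show (4 : ℝ) = 2 ^ 2 by norm_num, Real.sqrt_sq (by norm_num)]

theorem sum_sqrt_mul_sq_mul_le {ι : Type*} (s : Finset ι) {x y : ι → ℝ} (hx : ∀ i, 0 ≤ x i)
    (hy : ∀ i, 0 ≤ y i) :
    ∑ i ∈ s, √(x i) * (x i ^ 2 * y i) ≤
      (∑ i ∈ s, x i * y i) ^ (1 / 4 : ℝ) * (∑ i ∈ s, x i ^ 3 * y i) ^ (3 / 4 : ℝ) := by
  have hHolder := Real.inner_le_weight_mul_Lp_of_nonneg s (p := 4) (by norm_num)
    (fun i => x i ^ 3 * y i) (fun i => (√(x i))⁻¹)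
    (fun i => mul_nonneg (pow_nonneg (hx i) 3) (hy i)) (fun i => by positivity)
  have h1 (i : ι) : x i ^ 3 * y i * (√(x i))⁻¹ = √(x i) * (x i ^ 2 * y i) := by
    rcases (hx i).eq_or_lt with h | h
    · simp [← h]
    · field_simp
      rw [Real.sq_sqrt (hx i)]
      ring
  have h4 (i : ι) : x i ^ 3 * y i * (√(x i))⁻¹ ^ (4 : ℝ) = x i * y i := by
    rcases (hx i).eq_or_lt with h | h
    · simp [← h]
    · rw [Real.rpow_ofNat, inv_pow, show √(x i) ^ 4 = x i ^ 2 by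
        rw [show 4 = 2 * 2 from rfl, pow_mul, Real.sq_sqrt (hx i)]]
      field_simp
  simp only [h1, h4] at hHolder
  rw [mul_comm]
  convert hHolder using 2 <;> norm_num

lemma sub_pow_three_mul_mul_sign_add_one (n k : ℤ) :
    (n - k) ^ 3 * k * ((n - k).sign * k.sign + 1) =
      (n - k) ^ 2 * (|k * (n - k)| + k * (n - k)) := by
  rw [← Int.sign_mul, ← Int.natCast_natAbs, ← Int.mul_sign_self, mul_comm (n - k) k]
  ring

lemma abs_sub_pow_three_mul_mul_sign_add_one_le (n k : ℤ) :
    |(n - k) ^ 3 * k * ((n - k).sign * k.sign + 1)| ≤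
      if 0 < k * (n - k) then 2 * n ^ 2 * (|n - k| * |k|) else 0 := by
  rw [sub_pow_three_mul_mul_sign_add_one]
  split_ifs with h
  · have hnk : |n - k| ≤ |n| := by
      rw [abs_le]
      rcases pos_and_pos_or_neg_and_neg_of_mul_pos h with ⟨_, _⟩ | ⟨_, _⟩ <;>
        constructor <;> linarith [le_abs_self n, neg_abs_le n]
    have hprod : k * (n - k) = |n - k| * |k| := by
      rw [← abs_mul, mul_comm, abs_of_pos (mul_comm k (n - k) ▸ h)]
    rw [abs_of_pos h, ← two_mul, hprod, abs_of_nonneg (by positivity)]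
    calc (n - k) ^ 2 * (2 * (|n - k| * |k|)) = 2 * (n - k) ^ 2 * (|n - k| * |k|) := by ring
      _ ≤ 2 * n ^ 2 * (|n - k| * |k|) :=
          mul_le_mul_of_nonneg_right (by linarith [sq_le_sq.2 hnk]) (by positivity)
  · rw [abs_of_nonpos (not_lt.1 h), neg_add_cancel, mul_zero, abs_zero]

noncomputable def trilinearTerm (ghat hhat : ℤ → ℂ) (p : ℤ × ℤ) : ℂ :=
  starRingEnd ℂ (ghat p.1) * hhat (p.1 - p.2) * hhat p.2 *
    (((p.1 - p.2 : ℤ) ^ 3 * p.2 : ℤ) : ℂ) *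
    ((Int.sign (p.1 - p.2) : ℂ) * (Int.sign p.2 : ℂ) + 1)

lemma norm_trilinearTerm_le (ghat hhat : ℤ → ℂ) (n k : ℤ) :
    ‖trilinearTerm ghat hhat (n, k)‖ ≤ 2 * if 0 < k * (n - k) then
      |(n : ℝ)| ^ 2 * ‖ghat n‖ * (|((n - k : ℤ) : ℝ)| * ‖hhat (n - k)‖) * (|(k : ℝ)| * ‖hhat k‖)
      else 0 := by
  set m : ℤ := (n - k) ^ 3 * k * ((n - k).sign * k.sign + 1)
  have hm : |(m : ℝ)| ≤
      if 0 < k * (n - k) then 2 * (n : ℝ) ^ 2 * (|((n - k : ℤ) : ℝ)| * |(k : ℝ)|) else 0 := by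
    have := abs_sub_pow_three_mul_mul_sign_add_one_le n k
    split_ifs at this ⊢ <;> exact_mod_cast this
  have hterm : trilinearTerm ghat hhat (n, k) =
      starRingEnd ℂ (ghat n) * hhat (n - k) * hhat k * (m : ℂ) := by
    simp only [trilinearTerm, m]
    push_cast
    ring
  calc ‖trilinearTerm ghat hhat (n, k)‖ = ‖ghat n‖ * ‖hhat (n - k)‖ * ‖hhat k‖ * |(m : ℝ)| := by
        rw [hterm, norm_mul, norm_mul, norm_mul, RCLike.norm_conj, Complex.norm_intCast]
    _ ≤ ‖ghat n‖ * ‖hhat (n - k)‖ * ‖hhat k‖ *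
        if 0 < k * (n - k) then 2 * (n : ℝ) ^ 2 * (|((n - k : ℤ) : ℝ)| * |(k : ℝ)|) else 0 := by
        gcongr
    _ = _ := by rw [sq_abs]; split_ifs <;> ring

theorem norm_sum_trilinearTerm_le (ghat hhat : ℤ → ℂ) (s t : Finset ℤ)
    (ht : ∀ k ∉ t, hhat k = 0) :
    ‖∑ p ∈ s ×ˢ t, trilinearTerm ghat hhat p‖ ≤
      4 * √(∑ n ∈ s, |(n : ℝ)| ^ 4 * ‖ghat n‖ ^ 2) *
        (∑ j ∈ t, |(j : ℝ)| * ‖hhat j‖ ^ 2) ^ (1 / 4 : ℝ) *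
        (∑ j ∈ t, |(j : ℝ)| ^ 3 * ‖hhat j‖ ^ 2) ^ (3 / 4 : ℝ) := by
  set G : ℤ → ℝ := fun n => |(n : ℝ)| ^ 2 * ‖ghat n‖
  set b : ℤ → ℝ := fun j => |(j : ℝ)| * ‖hhat j‖
  have hG (n : ℤ) : G n ^ 2 = |(n : ℝ)| ^ 4 * ‖ghat n‖ ^ 2 := by ring
  have hb (j : ℤ) : √|(j : ℝ)| * b j ^ 2 = √|(j : ℝ)| * (|(j : ℝ)| ^ 2 * ‖hhat j‖ ^ 2) := by ring
  calc ‖∑ p ∈ s ×ˢ t, trilinearTerm ghat hhat p‖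
      ≤ ∑ p ∈ s ×ˢ t, ‖trilinearTerm ghat hhat p‖ := norm_sum_le _ _
    _ ≤ ∑ p ∈ s ×ˢ t, 2 * if 0 < p.2 * (p.1 - p.2) then G p.1 * b (p.1 - p.2) * b p.2 else 0 :=
        sum_le_sum fun p _ => norm_trilinearTerm_le ghat hhat p.1 p.2
    _ = 2 * ∑ p ∈ s ×ˢ t with 0 < p.2 * (p.1 - p.2), G p.1 * b (p.1 - p.2) * b p.2 := by
        rw [← mul_sum, sum_filter]
    _ ≤ 2 * (2 * √(∑ n ∈ s, G n ^ 2) * ∑ j ∈ t, √|(j : ℝ)| * b j ^ 2) := by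
        gcongr
        exact sum_filter_mul_mul_le s t G b fun j hj => by simp [b, ht j hj]
    _ ≤ 4 * √(∑ n ∈ s, |(n : ℝ)| ^ 4 * ‖ghat n‖ ^ 2) *
        ((∑ j ∈ t, |(j : ℝ)| * ‖hhat j‖ ^ 2) ^ (1 / 4 : ℝ) *
          (∑ j ∈ t, |(j : ℝ)| ^ 3 * ‖hhat j‖ ^ 2) ^ (3 / 4 : ℝ)) := by
        simp only [hG, hb]
        rw [← mul_assoc, ← mul_assoc, show (2 : ℝ) * 2 = 4 by norm_num]
        gcongr
        exact sum_sqrt_mul_sq_mul_le t (fun j => abs_nonneg _) fun j => sq_nonneg _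
    _ = _ := by ring

/-- Capillarity commutator estimate |M(g,h,h)| ≤ C ν ‖g‖_{H²} ‖h‖_{H^{1/2}}^{1/2} ‖h‖_{H^{3/2}}^{3/2},
where, in Fourier variables,
M(g,h,h) = ν Σ_{n,k} conj(ĝ n) ĥ(n−k) ĥ(k) (n−k)³ k (sgn(n−k) sgn k + 1)
and ‖u‖_{H^s} = (Σ_n |n|^{2s} |û(n)|²)^{1/2} for mean-free u. -/
theorem stmt_16 :
    ∃ C : ℝ, 0 < C ∧ ∀ (ν : ℝ), 0 < ν → ∀ ghat hhat : ℤ → ℂ,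
      (Function.support ghat).Finite → (Function.support hhat).Finite →
      ghat 0 = 0 → hhat 0 = 0 →
      ‖(ν : ℂ) * ∑' p : ℤ × ℤ,
          starRingEnd ℂ (ghat p.1) * hhat (p.1 - p.2) * hhat p.2 *
            (((p.1 - p.2 : ℤ) ^ 3 * p.2 : ℤ) : ℂ) *
            ((Int.sign (p.1 - p.2) : ℂ) * (Int.sign p.2 : ℂ) + 1)‖ ≤
        C * ν * Real.sqrt (∑' n : ℤ, (|n| : ℝ) ^ (4 : ℝ) * ‖ghat n‖ ^ 2) *
          (∑' n : ℤ, (|n| : ℝ) ^ (1 : ℝ) * ‖hhat n‖ ^ 2) ^ ((1 : ℝ) / 4) *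
          (∑' n : ℤ, (|n| : ℝ) ^ (3 : ℝ) * ‖hhat n‖ ^ 2) ^ ((3 : ℝ) / 4) := by
  refine ⟨4, by norm_num, fun ν hν ghat hhat hg hh _ _ => ?_⟩
  set s := hg.toFinset
  set t := hh.toFinset
  have hs : ∀ n ∉ s, ghat n = 0 := by simp [s]
  have ht : ∀ k ∉ t, hhat k = 0 := by simp [t]
  have hst : ∀ p ∉ s ×ˢ t, trilinearTerm ghat hhat p = 0 := by
    intro p hp
    rcases not_and_or.1 (mem_product.not.1 hp) with h | h
    · simp [trilinearTerm, hs _ h]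
    · simp [trilinearTerm, ht _ h]
  change ‖(ν : ℂ) * ∑' p, trilinearTerm ghat hhat p‖ ≤ _
  rw [tsum_eq_sum hst, tsum_eq_sum (s := s) fun n hn => by simp [hs n hn],
    tsum_eq_sum (s := t) fun k hk => by simp [ht k hk],
    tsum_eq_sum (s := t) fun k hk => by simp [ht k hk], norm_mul, Complex.norm_real,
    Real.norm_of_nonneg hν.le]
  simp only [Real.rpow_one, Real.rpow_ofNat]
  calc ν * ‖∑ p ∈ s ×ˢ t, trilinearTerm ghat hhat p‖ ≤ ν * _ :=
        mul_le_mul_of_nonneg_left (norm_sum_trilinearTerm_le ghat hhat s t ht) hν.le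
    _ = _ := by ring
end

section
/- If y : [0,T] → [0,∞) is absolutely continuous and satisfies (1/2) y'(t) + D(t) ≤ C √(y(t)) · D(t) a.e., where D ≥ 0 is integrable and C √(y(0)) ≤ 1/2, then y(t) ≤ y(0) for all t in [0,T], and moreover y(t) + ∫_0^t D(s) ds ≤ y(0). -/
open MeasureTheory

/-- Abstract absorption lemma: if (1/2)y' + D ≤ C√y·D with D ≥ 0 integrable and
C√(y 0) ≤ 1/2, then y(t) + ∫₀ᵗ D ≤ y(0) on [0,T]. -/
theorem stmt_18 (T C : ℝ) (hT : 0 ≤ T) (y y' D : ℝ → ℝ)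
    (hy_nonneg : ∀ t ∈ Set.Icc 0 T, 0 ≤ y t)
    (hD_nonneg : ∀ t ∈ Set.Icc 0 T, 0 ≤ D t)
    (hD_int : IntegrableOn D (Set.Icc 0 T))
    (hderiv : ∀ t ∈ Set.Icc 0 T, HasDerivAt y (y' t) t)
    (hineq : ∀ t ∈ Set.Icc 0 T, (1 / 2) * y' t + D t ≤ C * Real.sqrt (y t) * D t)
    (hsmall : C * Real.sqrt (y 0) ≤ 1 / 2) :
    ∀ t ∈ Set.Icc 0 T, y t ≤ y 0 ∧ y t + ∫ s in Set.Ioc 0 t, D s ≤ y 0 := by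
  have hcont : ContinuousOn y (Set.Icc 0 T) := fun t ht =>
    (hderiv t ht).continuousAt.continuousWithinAt
  -- Step 1: y t ≤ y 0 on [0,T]
  have hle : ∀ t ∈ Set.Icc 0 T, y t ≤ y 0 := by
    by_contra h
    push_neg at h
    obtain ⟨t1, ht1, hgt⟩ := h
    set S : Set ℝ := Set.Icc 0 t1 ∩ y ⁻¹' Set.Iic (y 0) with hSdef
    have h0S : (0 : ℝ) ∈ S := ⟨⟨le_rfl, ht1.1⟩, by simp⟩
    have hSne : S.Nonempty := ⟨0, h0S⟩
    have hSbdd : BddAbove S := ⟨t1, fun x hx => hx.1.2⟩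
    have hsubT : Set.Icc (0 : ℝ) t1 ⊆ Set.Icc 0 T := Set.Icc_subset_Icc le_rfl ht1.2
    have hSclosed : IsClosed S :=
      (hcont.mono hsubT).preimage_isClosed_of_isClosed isClosed_Icc isClosed_Iic
    set s := sSup S with hs_def
    have hsS : s ∈ S := hSclosed.csSup_mem hSne hSbdd
    have hsT : s ∈ Set.Icc 0 T := hsubT hsS.1
    have hys : y s ≤ y 0 := hsS.2
    have hslt : s < t1 := by
      rcases lt_or_eq_of_le hsS.1.2 with h | h
      · exact h
      · exact absurd (h ▸ hys) (not_le.mpr hgt)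
    -- the function C√(y ·) is continuous and < 1 at s
    have hgs : C * Real.sqrt (y s) < 1 := by
      rcases le_or_gt C 0 with hC | hC
      · have := mul_nonpos_of_nonpos_of_nonneg hC (Real.sqrt_nonneg (y s))
        linarith
      · have : Real.sqrt (y s) ≤ Real.sqrt (y 0) := Real.sqrt_le_sqrt hys
        nlinarith
    have hgcont : ContinuousWithinAt (fun u => C * Real.sqrt (y u)) (Set.Icc 0 T) s :=
      (continuousWithinAt_const.mul
        ((Real.continuous_sqrt.continuousAt).comp_continuousWithinAt (hcont s hsT)))
    have hev : ∀ᶠ u in nhdsWithin s (Set.Icc 0 T), C * Real.sqrt (y u) < 1 :=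
      hgcont.eventually_lt_const hgs
    rw [Filter.eventually_iff, Metric.mem_nhdsWithin_iff] at hev
    obtain ⟨ε, hε, hball⟩ := hev
    set t2 := min t1 (s + ε / 2) with ht2_def
    have hst2 : s < t2 := lt_min hslt (by linarith)
    have ht2T : t2 ∈ Set.Icc 0 T := ⟨le_trans hsT.1 hst2.le, (min_le_left _ _).trans ht1.2⟩
    have hsub2 : Set.Icc s t2 ⊆ Set.Icc 0 T :=
      Set.Icc_subset_Icc hsT.1 ht2T.2
    have hkey : ∀ u ∈ Set.Icc s t2, C * Real.sqrt (y u) < 1 := by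
      intro u hu
      apply hball
      constructor
      · rw [Metric.mem_ball, Real.dist_eq, abs_of_nonneg (by linarith [hu.1])]
        have : u ≤ s + ε / 2 := le_trans hu.2 (min_le_right _ _)
        linarith
      · exact hsub2 hu
    have hy'le : ∀ u ∈ Set.Icc s t2, y' u ≤ 0 := by
      intro u hu
      have huT := hsub2 hu
      have h1 := hineq u huT
      have h2 := hD_nonneg u huT
      have h3 : C * Real.sqrt (y u) * D u ≤ 1 * D u :=
        mul_le_mul_of_nonneg_right (hkey u hu).le h2
      linarith
    have hmono : y t2 - y s ≤ ∫ u in s..t2, (0 : ℝ) := by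
      apply intervalIntegral.sub_le_integral_of_hasDeriv_right_of_le hst2.le
        (hcont.mono hsub2)
        (fun x hx => ((hderiv x (hsub2 ⟨hx.1.le, hx.2.le⟩)).hasDerivWithinAt))
        ((integrable_zero _ _ _).integrableOn)
        (fun x hx => hy'le x ⟨hx.1.le, hx.2.le⟩)
    simp only [intervalIntegral.integral_zero] at hmono
    have ht2S : t2 ∈ S := ⟨⟨ht2T.1, min_le_left _ _⟩, by
      simp only [Set.mem_preimage, Set.mem_Iic]; linarith⟩
    have : t2 ≤ s := le_csSup hSbdd ht2S
    linarith
  -- Step 2: derivative bound y' ≤ -D on [0,T]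
  have hy'leD : ∀ u ∈ Set.Icc 0 T, y' u ≤ -D u := by
    intro u hu
    have h1 := hineq u hu
    have h2 := hD_nonneg u hu
    have hhalf : C * Real.sqrt (y u) ≤ 1 / 2 := by
      rcases le_or_gt C 0 with hC | hC
      · have := mul_nonpos_of_nonpos_of_nonneg hC (Real.sqrt_nonneg (y u))
        linarith
      · have : Real.sqrt (y u) ≤ Real.sqrt (y 0) := Real.sqrt_le_sqrt (hle u hu)
        nlinarith
    have h3 : C * Real.sqrt (y u) * D u ≤ (1 / 2) * D u :=
      mul_le_mul_of_nonneg_right hhalf h2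
    linarith
  intro t ht
  refine ⟨hle t ht, ?_⟩
  have hsub : Set.Icc (0 : ℝ) t ⊆ Set.Icc 0 T := Set.Icc_subset_Icc le_rfl ht.2
  have hint : (∫ u in (0 : ℝ)..t, D u) ≤ (fun u => -y u) t - (fun u => -y u) 0 := by
    apply intervalIntegral.integral_le_sub_of_hasDeriv_right_of_le ht.1
      ((hcont.mono hsub).neg)
      (fun x hx => ((hderiv x (hsub ⟨hx.1.le, hx.2.le⟩)).neg).hasDerivWithinAt)
      (hD_int.mono_set hsub)
      (fun x hx => by
        have := hy'leD x (hsub ⟨hx.1.le, hx.2.le⟩); linarith)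
  rw [intervalIntegral.integral_of_le ht.1] at hint
  simp only at hint
  linarith
end
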